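/- Let n be odd and let C₀ = {c₀, c₁, …, c_n} ⊆ 𝔽ⁿ where c₀ = 0 (the all-zero word) and supp(c_i) = {1, 2, …, i} for i = 1, …, n. Then for every word x ∈ 𝔽ⁿ there exists an index i ∈ {0, 1, …, n} with d(x, c_i) = (n−1)/2. -/

import Mathlib

open Finset

/-- The Hamming ball of radius `r` around `x` in `𝔽ⁿ = {0,1}ⁿ`. -/
def ballH (n r : ℕ) (x : Fin n → Bool) : Finset (Fin n → Bool) :=
  Finset.univ.filter (fun y => hammingDist x y ≤ r)

/-- `C` is an `(r, ≤ ℓ)`-identifying code in `𝔽ⁿ`. -/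
def IdCode (n r ℓ : ℕ) (C : Finset (Fin n → Bool)) : Prop :=
  C.Nonempty ∧ ∀ X Y : Finset (Fin n → Bool),
    X.card ≤ ℓ → Y.card ≤ ℓ → X ≠ Y →
      (X.biUnion (ballH n r)) ∩ C ≠ (Y.biUnion (ballH n r)) ∩ C

/-- The smallest cardinality of an `(r, ≤ ℓ)`-identifying code in `𝔽ⁿ`. -/
noncomputable def Mid (n r ℓ : ℕ) : ℕ :=
  sInf {k | ∃ C : Finset (Fin n → Bool), IdCode n r ℓ C ∧ C.card = k}

/-- binary entropy -/
noncomputable def binH (x : ℝ) : ℝ :=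
  -(x * Real.logb 2 x) - (1 - x) * Real.logb 2 (1 - x)

/-- m_n(r,ℓ) -/
noncomputable def mlow (n r ℓ : ℕ) : ℕ :=
  sInf {k | ∃ X Y : Finset (Fin n → Bool), X ≠ Y ∧ 1 ≤ X.card ∧ X.card ≤ ℓ ∧
    1 ≤ Y.card ∧ Y.card ≤ ℓ ∧
    (symmDiff (X.biUnion (ballH n r)) (Y.biUnion (ballH n r))).card = k}

/-- N_ℓ : the number of unordered pairs {X, Y} of distinct subsets with 1 ≤ card ≤ ℓ. -/
def Npairs (n ℓ : ℕ) : ℕ :=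
  (((Finset.univ : Finset (Finset (Fin n → Bool))).filter
      (fun X => 1 ≤ X.card ∧ X.card ≤ ℓ)).powersetCard 2).card

/-! The distance `d(x, c_i)` changes by at most one when `i` increases by one, and
`d(x, c_0) + d(x, c_n) = n` since `c_n` is the complement of `c_0`. For `n = 2m + 1` the value `m`
therefore lies between `d(x, c_0)` and `d(x, c_n)`, and a discrete intermediate value argument
along the path `c_0, c_1, …, c_n` finds an `i` with `d(x, c_i) = m`. -/

theorem Nat.exists_eq_of_succ_le_add_one {f : ℕ → ℕ} {n t : ℕ}
    (hf : ∀ i < n, f (i + 1) ≤ f i + 1) (h0 : f 0 ≤ t) (hn : t ≤ f n) :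
    ∃ i ≤ n, f i = t := by
  induction n with
  | zero => exact ⟨0, le_rfl, le_antisymm h0 hn⟩
  | succ n ih =>
    by_cases ht : t ≤ f n
    · obtain ⟨i, hi, hfi⟩ := ih (fun i hi => hf i (by omega)) ht
      exact ⟨i, by omega, hfi⟩
    · exact ⟨n + 1, le_rfl, by have := hf n n.lt_succ_self; omega⟩

section

variable {ι β : Type*} [Fintype ι] [DecidableEq β]

theorem exists_hammingDist_eq_of_path (x : ι → β) {c : ℕ → ι → β} {n t : ℕ}
    (hc : ∀ i < n, hammingDist (c i) (c (i + 1)) ≤ 1)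
    (ht : t ∈ Set.uIcc (hammingDist x (c 0)) (hammingDist x (c n))) :
    ∃ i ≤ n, hammingDist x (c i) = t := by
  have step : ∀ i j, hammingDist (c i) (c j) ≤ 1 →
      hammingDist x (c j) ≤ hammingDist x (c i) + 1 := fun i j h =>
    (hammingDist_triangle x (c i) (c j)).trans (by omega)
  rcases Set.mem_uIcc.1 ht with ⟨h0, hn⟩ | ⟨hn, h0⟩
  · exact Nat.exists_eq_of_succ_le_add_one (fun i hi => step _ _ (hc i hi)) h0 hn
  · obtain ⟨i, hi, hfi⟩ := Nat.exists_eq_of_succ_le_add_one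
      (f := fun i => hammingDist x (c (n - i))) (n := n)
      (fun i hi => step _ _ <| by
        rw [hammingDist_comm, show n - i = n - (i + 1) + 1 by omega]; exact hc _ (by omega))
      (by simpa using hn) (by simpa using h0)
    exact ⟨n - i, n.sub_le i, hfi⟩

theorem hammingDist_add_hammingDist_not (x y : ι → Bool) :
    hammingDist x y + hammingDist x (fun j => !y j) = Fintype.card ι := by
  rw [← card_univ (α := ι), ← card_filter_add_card_filter_not (fun j => x j ≠ y j)]
  simp only [hammingDist]
  congr 2
  ext j
  cases x j <;> cases y j <;> simp

end

def prefixWord (n i : ℕ) : Fin n → Bool := fun j => decide (j.val < i)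

theorem hammingDist_prefixWord_succ_le (n i : ℕ) :
    hammingDist (prefixWord n i) (prefixWord n (i + 1)) ≤ 1 :=
  card_le_one.2 fun a ha b hb => Fin.ext <| by
    simp only [prefixWord, Order.lt_add_one_iff, ne_eq, decide_eq_decide, mem_filter, mem_univ,
      true_and] at ha hb
    omega

theorem prefixWord_self_eq_not_prefixWord_zero (n : ℕ) :
    prefixWord n n = fun j => !prefixWord n 0 j := by
  funext j; simp [prefixWord]

/-- For odd `n` and `C₀ = {c₀, …, c_n}` with `supp(c_i) = {1, …, i}`
(here: the first `i` coordinates), every word `x ∈ 𝔽ⁿ` is at distance exactly `(n-1)/2`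
from some `c_i`. -/
theorem exists_codeword_at_half_distance_odd (n : ℕ) (hn : Odd n) (x : Fin n → Bool) :
    ∃ i ≤ n, hammingDist x (fun j : Fin n => decide (j.val < i)) = (n - 1) / 2 := by
  obtain ⟨m, rfl⟩ := hn
  have hsum := hammingDist_add_hammingDist_not x (prefixWord (2 * m + 1) 0)
  rw [← prefixWord_self_eq_not_prefixWord_zero, Fintype.card_fin] at hsum
  have hm : m ∈ Set.uIcc (hammingDist x (prefixWord _ 0))
      (hammingDist x (prefixWord _ (2 * m + 1))) := by
    rw [Set.mem_uIcc]; omega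
  rw [show (2 * m + 1 - 1) / 2 = m by omega]
  exact exists_hammingDist_eq_of_path x (fun i _ => hammingDist_prefixWord_succ_le _ i) hm
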